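/- arXiv:2209.06907 — 2 statements merged into one kernel-verified Lean document; each statement's English description precedes it below -/
import Mathlib

section
/- Let f be a nonnegative function on primes with ∑_p f(p)/p ≤ A, let f*(m) = ∑_{p|m} f(p), and let b : ℕ → ℝ be any function tending to infinity. Then the proportion of m ≤ n with f*(m) ≤ b(n) tends to 1 as n → ∞. -/
open Filter

theorem sum_bound (f : ℕ → ℝ) (A : ℝ)
    (hf : ∀ p : ℕ, p.Prime → 0 ≤ f p)
    (hA : ∀ n : ℕ, ∑ p ∈ (Finset.Icc 1 n).filter Nat.Prime, f p / p ≤ A)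
    (n : ℕ) : ∑ m ∈ Finset.Icc 1 n, ∑ p ∈ m.primeFactors, f p ≤ A * n := by
  have h1 : ∀ m ∈ Finset.Icc 1 n, ∑ p ∈ m.primeFactors, f p
      = ∑ p ∈ (Finset.Icc 1 n).filter Nat.Prime, if p ∣ m then f p else 0 := by
    intro m hm
    simp only [Finset.mem_Icc] at hm
    have : ((Finset.Icc 1 n).filter Nat.Prime).filter (· ∣ m) = m.primeFactors := by
      ext p
      simp only [Finset.mem_filter, Finset.mem_Icc, Nat.mem_primeFactors]
      constructor
      · rintro ⟨⟨⟨_, _⟩, hp⟩, hpd⟩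
        exact ⟨hp, hpd, by omega⟩
      · rintro ⟨hp, hpd, _⟩
        exact ⟨⟨⟨hp.one_lt.le, (Nat.le_of_dvd (by omega) hpd).trans hm.2⟩, hp⟩, hpd⟩
    rw [← this, Finset.sum_filter]
  rw [Finset.sum_congr rfl h1, Finset.sum_comm]
  have h2 : ∀ p ∈ (Finset.Icc 1 n).filter Nat.Prime,
      (∑ m ∈ Finset.Icc 1 n, if p ∣ m then f p else 0) ≤ (n : ℝ) * (f p / p) := by
    intro p hp
    simp only [Finset.mem_filter] at hp
    rw [← Finset.sum_filter, Finset.sum_const, nsmul_eq_mul]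
    have hcard : ((Finset.Icc 1 n).filter (p ∣ ·)).card = n / p := by
      have h := Nat.Ioc_filter_dvd_card_eq_div n p
      rwa [show Finset.Ioc 0 n = Finset.Icc 1 n from (Finset.Icc_add_one_left_eq_Ioc (a := 0) (b := n))] at h
    rw [hcard]
    have h3 : ((n / p : ℕ) : ℝ) ≤ (n : ℝ) / p := Nat.cast_div_le
    calc ((n / p : ℕ) : ℝ) * f p ≤ (n : ℝ) / p * f p :=
          mul_le_mul_of_nonneg_right h3 (hf p hp.2)
      _ = (n : ℝ) * (f p / p) := by ring
  calc ∑ p ∈ (Finset.Icc 1 n).filter Nat.Prime, ∑ m ∈ Finset.Icc 1 n, (if p ∣ m then f p else 0)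
      ≤ ∑ p ∈ (Finset.Icc 1 n).filter Nat.Prime, (n : ℝ) * (f p / p) := Finset.sum_le_sum h2
    _ = (n : ℝ) * ∑ p ∈ (Finset.Icc 1 n).filter Nat.Prime, f p / p := by
        rw [Finset.mul_sum]
    _ ≤ (n : ℝ) * A := by
        apply mul_le_mul_of_nonneg_left (hA n) (by positivity)
    _ = A * n := by ring

theorem proportion_small_strongly_additive (f : ℕ → ℝ) (A : ℝ)
    (hf : ∀ p : ℕ, p.Prime → 0 ≤ f p)
    (hA : ∀ n : ℕ, ∑ p ∈ (Finset.Icc 1 n).filter Nat.Prime, f p / p ≤ A)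
    (b : ℕ → ℝ) (hb : Tendsto b atTop atTop) :
    Tendsto (fun n : ℕ =>
        (((Finset.Icc 1 n).filter
            (fun m => ∑ p ∈ m.primeFactors, f p ≤ b n)).card : ℝ) / n)
      atTop (nhds 1) := by
  have hg : ∀ m : ℕ, 0 ≤ ∑ p ∈ m.primeFactors, f p := fun m =>
    Finset.sum_nonneg fun p hp => hf p (Nat.prime_of_mem_primeFactors hp)
  have hbad : ∀ n : ℕ, b n *
      (((Finset.Icc 1 n).filter (fun m => ¬ (∑ p ∈ m.primeFactors, f p ≤ b n))).card : ℝ)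
      ≤ A * n := by
    intro n
    calc b n * (((Finset.Icc 1 n).filter (fun m => ¬ (∑ p ∈ m.primeFactors, f p ≤ b n))).card : ℝ)
        = ∑ _m ∈ (Finset.Icc 1 n).filter (fun m => ¬ (∑ p ∈ m.primeFactors, f p ≤ b n)), b n := by
          rw [Finset.sum_const, nsmul_eq_mul, mul_comm]
      _ ≤ ∑ m ∈ (Finset.Icc 1 n).filter (fun m => ¬ (∑ p ∈ m.primeFactors, f p ≤ b n)),
            ∑ p ∈ m.primeFactors, f p := by
          apply Finset.sum_le_sum
          intro m hm
          exact (lt_of_not_ge (Finset.mem_filter.mp hm).2).le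
      _ ≤ ∑ m ∈ Finset.Icc 1 n, ∑ p ∈ m.primeFactors, f p :=
          Finset.sum_le_sum_of_subset_of_nonneg (Finset.filter_subset _ _)
            (fun m _ _ => hg m)
      _ ≤ A * n := sum_bound f A hf hA n
  have hcards : ∀ n : ℕ,
      ((Finset.Icc 1 n).filter (fun m => ∑ p ∈ m.primeFactors, f p ≤ b n)).card
      + ((Finset.Icc 1 n).filter (fun m => ¬ (∑ p ∈ m.primeFactors, f p ≤ b n))).card = n := by
    intro n
    rw [Finset.card_filter_add_card_filter_not, Nat.card_Icc]
    omega
  apply tendsto_of_tendsto_of_tendsto_of_le_of_le' (g := fun n => 1 - A / b n)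
    (h := fun _ => (1 : ℝ))
  · have h0 : Tendsto (fun n => A / b n) atTop (nhds 0) := tendsto_const_nhds.div_atTop hb
    have h1 : Tendsto (fun n => (1:ℝ) - A / b n) atTop (nhds (1 - 0)) :=
      (tendsto_const_nhds (x := (1:ℝ))).sub h0
    simpa using h1
  · exact tendsto_const_nhds
  · filter_upwards [hb.eventually_gt_atTop 0, eventually_ge_atTop 1] with n hbn hn
    have hn' : (0:ℝ) < n := by exact_mod_cast Nat.lt_of_lt_of_le Nat.zero_lt_one hn
    have h1 : (((Finset.Icc 1 n).filter (fun m => ¬ (∑ p ∈ m.primeFactors, f p ≤ b n))).card : ℝ)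
        ≤ A * n / b n := by
      rw [le_div_iff₀ hbn, mul_comm]
      exact hbad n
    have h2 : (((Finset.Icc 1 n).filter (fun m => ∑ p ∈ m.primeFactors, f p ≤ b n)).card : ℝ)
        = n - (((Finset.Icc 1 n).filter (fun m => ¬ (∑ p ∈ m.primeFactors, f p ≤ b n))).card : ℝ) := by
      have := hcards n
      have : ((((Finset.Icc 1 n).filter (fun m => ∑ p ∈ m.primeFactors, f p ≤ b n)).card : ℝ))
          + (((Finset.Icc 1 n).filter (fun m => ¬ (∑ p ∈ m.primeFactors, f p ≤ b n))).card : ℝ)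
          = n := by exact_mod_cast this
      linarith
    rw [le_div_iff₀ hn']
    have h3 : (1 - A / b n) * n = n - A * n / b n := by field_simp
    linarith
  · filter_upwards [eventually_ge_atTop 1] with n hn
    have hn' : (0:ℝ) < n := by exact_mod_cast Nat.lt_of_lt_of_le Nat.zero_lt_one hn
    rw [div_le_one hn']
    have : ((Finset.Icc 1 n).filter (fun m => ∑ p ∈ m.primeFactors, f p ≤ b n)).card ≤ n := by
      have := (Finset.card_filter_le (Finset.Icc 1 n) (fun m => ∑ p ∈ m.primeFactors, f p ≤ b n))
      rwa [Nat.card_Icc, Nat.add_sub_cancel] at this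
    exact_mod_cast this
end

section
/- ∑_{p ≤ x, p prime} (ln p)/p = ln x + O(1); that is, there is a constant C such that |∑_{p≤x} (ln p)/p − ln x| ≤ C for all x ≥ 2. -/
/-!
By Legendre's formula `v_p(n!) = ∑_{k ≥ 1} ⌊n / p^k⌋`, the exponent of `p` in `n!` lies between
`n/p - 1` and `n/(p - 1)`. Hence `log n! = ∑_{p ≤ n} v_p(n!) log p` differs from
`n ∑_{p ≤ n} log p / p` by at most `θ(n) ≤ n log 4` on one side and by at most
`n ∑_p log p / (p (p - 1))`, a convergent series times `n`, on the other. Since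
`n log n - n ≤ log n! ≤ n log n`, dividing by `n` bounds `∑_{p ≤ n} log p / p - log n`, and replacing
`⌊x⌋` by `x` changes the logarithm by at most `log 2`.
-/

open Finset Real
open scoped Nat Chebyshev

theorem Nat.primeFactors_factorial_subset_primesLE (n : ℕ) : (n !).primeFactors ⊆ n.primesLE :=
  fun _ hp ↦ Nat.mem_primesLE.mpr
    ⟨((Nat.prime_of_mem_primeFactors hp).dvd_factorial).mp (Nat.dvd_of_mem_primeFactors hp),
      Nat.prime_of_mem_primeFactors hp⟩

theorem Real.log_factorial_eq_sum_primesLE (n : ℕ) :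
    log (n ! : ℕ) = ∑ p ∈ n.primesLE, ((n !).factorization p : ℝ) * log p := by
  rw [log_nat_eq_sum_factorization]
  exact Finsupp.sum_of_support_subset _ (n.primeFactors_factorial_subset_primesLE) _ (by simp)

theorem Nat.div_le_factorization_factorial {p : ℕ} (hp : p.Prime) (n : ℕ) :
    n / p ≤ (n !).factorization p := by
  rw [Nat.factorization_factorial hp (by omega : Nat.log p n < Nat.log p n + 2)]
  simpa using single_le_sum (f := fun i ↦ n / p ^ i) (fun _ _ ↦ Nat.zero_le _)
    (by simp : 1 ∈ Ico 1 (Nat.log p n + 2))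

theorem Nat.sub_one_mul_factorization_factorial_le {p : ℕ} (hp : p.Prime) (n : ℕ) :
    (p - 1) * (n !).factorization p ≤ n := by
  rw [Nat.sub_one_mul_factorization_factorial hp]
  exact Nat.sub_le _ _

theorem div_sub_one_le_factorization_factorial {p : ℕ} (hp : p.Prime) (n : ℕ) :
    (n : ℝ) / p - 1 ≤ (n !).factorization p := by
  have h := Nat.sub_one_lt_floor ((n : ℝ) / p)
  rw [Nat.floor_div_natCast, Nat.floor_natCast] at h
  exact h.le.trans (mod_cast Nat.div_le_factorization_factorial hp n)

theorem factorization_factorial_le_div_sub_one {p : ℕ} (hp : p.Prime) (n : ℕ) :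
    ((n !).factorization p : ℝ) ≤ n / (p - 1) := by
  have hp1 : (1 : ℝ) < p := mod_cast hp.one_lt
  rw [le_div_iff₀ (by linarith), mul_comm]
  have h := Nat.sub_one_mul_factorization_factorial_le hp n
  rw [← Nat.cast_le (α := ℝ), Nat.cast_mul, Nat.cast_sub hp.one_le, Nat.cast_one] at h
  exact h

theorem mul_sum_primesLE_log_div_le (n : ℕ) :
    n * ∑ p ∈ n.primesLE, log p / p ≤ log (n ! : ℕ) + θ n := by
  rw [log_factorial_eq_sum_primesLE, Chebyshev.theta_eq_sum_primesLE_log, ← sum_add_distrib,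
    mul_sum]
  refine sum_le_sum fun p hpn ↦ ?_
  have hp := Nat.prime_of_mem_primesLE hpn
  have hp0 : (0 : ℝ) < p := mod_cast hp.pos
  calc (n : ℝ) * (log p / p) = (n / p - 1 + 1) * log p := by field_simp; ring
    _ ≤ ((n !).factorization p + 1) * log p := by
      gcongr
      exact div_sub_one_le_factorization_factorial hp n
    _ = _ := by ring

theorem log_factorial_le_mul_sum_primesLE (n : ℕ) :
    log (n ! : ℕ) ≤ n * ∑ p ∈ n.primesLE, log p / p +
      n * ∑ p ∈ n.primesLE, log p / (p * (p - 1)) := by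
  rw [log_factorial_eq_sum_primesLE, mul_sum, mul_sum, ← sum_add_distrib]
  refine sum_le_sum fun p hpn ↦ ?_
  have hp := Nat.prime_of_mem_primesLE hpn
  have hp1 : (1 : ℝ) < p := mod_cast hp.one_lt
  calc ((n !).factorization p : ℝ) * log p ≤ n / (p - 1) * log p := by
        gcongr
        exact factorization_factorial_le_div_sub_one hp n
    _ = _ := by
      have : (p : ℝ) - 1 ≠ 0 := by linarith
      field_simp
      ring

theorem log_div_mul_sub_one_nonneg (n : ℕ) : 0 ≤ log n / (n * (n - 1)) := by
  rcases n.eq_zero_or_pos with rfl | hn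
  · simp
  have : (1 : ℝ) ≤ n := mod_cast hn
  exact div_nonneg (log_natCast_nonneg n) (mul_nonneg (by linarith) (by linarith))

theorem log_div_mul_sub_one_le_rpow (n : ℕ) :
    log n / (n * (n - 1)) ≤ 4 * (n : ℝ) ^ (-(3 / 2) : ℝ) := by
  rcases lt_or_ge n 2 with hn | hn
  · interval_cases n <;> norm_num
  have hn2 : (2 : ℝ) ≤ n := mod_cast hn
  have hn0 : (0 : ℝ) < n := by linarith
  calc log n / (n * (n - 1)) ≤ (n : ℝ) ^ (1 / 2 : ℝ) / (1 / 2) / (n ^ 2 / 2) := by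
        gcongr
        · exact log_le_rpow_div hn0.le one_half_pos
        · nlinarith
    _ = 4 * ((n : ℝ) ^ (1 / 2 : ℝ) / (n : ℝ) ^ (2 : ℝ)) := by
        rw [rpow_two]; ring
    _ = 4 * (n : ℝ) ^ (-(3 / 2) : ℝ) := by
        rw [← rpow_sub hn0]; norm_num

theorem summable_log_div_mul_sub_one : Summable fun n : ℕ ↦ log n / (n * (n - 1)) :=
  ((summable_nat_rpow.mpr (by norm_num)).mul_left 4).of_nonneg_of_le
    log_div_mul_sub_one_nonneg log_div_mul_sub_one_le_rpow

theorem log_factorial_le_mul_log (n : ℕ) : log (n ! : ℕ) ≤ n * log n := by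
  rw [← log_pow]
  exact log_le_log (mod_cast n.factorial_pos) (mod_cast n.factorial_le_pow)

theorem mul_log_sub_le_log_factorial (n : ℕ) : n * log n - n ≤ log (n ! : ℕ) := by
  rcases n.eq_zero_or_pos with rfl | hn
  · simp
  have hlog2pi : 0 ≤ log (2 * Real.pi) := log_nonneg (by linarith [pi_gt_three])
  linarith [Stirling.le_log_factorial_stirling hn.ne', log_natCast_nonneg n]

theorem abs_sum_primesLE_log_div_sub_log_le (n : ℕ) :
    |∑ p ∈ n.primesLE, log p / p - log n| ≤ 1 + log 4 + ∑' m : ℕ, log m / (m * (m - 1)) := by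
  set E := ∑' m : ℕ, log m / (m * (m - 1))
  have hE : 0 ≤ E := tsum_nonneg log_div_mul_sub_one_nonneg
  rcases n.eq_zero_or_pos with rfl | hn
  · simpa using by positivity
  have hn0 : (0 : ℝ) < n := mod_cast hn
  set S := ∑ p ∈ n.primesLE, log p / p
  have hupper : n * S ≤ n * (log n + log 4) := by
    have hθ := Chebyshev.theta_le_log4_mul_x hn0.le
    linarith [mul_sum_primesLE_log_div_le n, log_factorial_le_mul_log n]
  have hlower : n * (log n - 1 - E) ≤ n * S := by
    have htail : ∑ p ∈ n.primesLE, log p / (p * (p - 1)) ≤ E :=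
      summable_log_div_mul_sub_one.sum_le_tsum _ fun m _ ↦ log_div_mul_sub_one_nonneg m
    linarith [log_factorial_le_mul_sum_primesLE n, mul_log_sub_le_log_factorial n,
      mul_le_mul_of_nonneg_left htail hn0.le]
  have := (mul_le_mul_iff_right₀ hn0).mp hupper
  have := (mul_le_mul_iff_right₀ hn0).mp hlower
  rw [abs_le]
  constructor <;> linarith [log_nonneg (by norm_num : (1 : ℝ) ≤ 4)]

theorem abs_log_sub_log_floor_le {x : ℝ} (hx : 1 ≤ x) : |log x - log ⌊x⌋₊| ≤ log 2 := by
  have hN : (1 : ℝ) ≤ ⌊x⌋₊ := mod_cast Nat.one_le_floor_iff x |>.mpr hx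
  have hNx : (⌊x⌋₊ : ℝ) ≤ x := Nat.floor_le (by linarith)
  have hx2N : x ≤ 2 * ⌊x⌋₊ := by linarith [Nat.lt_floor_add_one x]
  have h2N := log_le_log (by linarith) hx2N
  rw [log_mul two_ne_zero (by linarith)] at h2N
  rw [abs_le]
  constructor <;> linarith [log_le_log (by linarith) hNx, log_nonneg one_le_two]

theorem mertens_first :
    ∃ C : ℝ, ∀ x : ℝ, 2 ≤ x →
      |(∑ p ∈ (Finset.Icc 1 ⌊x⌋₊).filter Nat.Prime, Real.log p / p) - Real.log x| ≤ C := by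
  refine ⟨1 + log 4 + ∑' m : ℕ, log m / (m * (m - 1)) + log 2, fun x hx ↦ ?_⟩
  rw [← Nat.primesLE_eq_filter_Icc_one]
  calc |∑ p ∈ ⌊x⌋₊.primesLE, log p / p - log x|
      ≤ |∑ p ∈ ⌊x⌋₊.primesLE, log p / p - log ⌊x⌋₊| + |log x - log ⌊x⌋₊| := by
        rw [abs_sub_comm (log x)]
        exact abs_sub_le _ _ _
    _ ≤ _ := add_le_add (abs_sum_primesLE_log_div_sub_log_le _)
        (abs_log_sub_log_floor_le (by linarith))
end
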